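/- arXiv:1804.10501 — 4 statements merged into one kernel-verified Lean document; each statement's English description precedes it below -/
import Mathlib

section
/- Let X, Y be Banach spaces, A : X × X → Y a continuous symmetric bilinear map with ‖A(x₁,x₂)‖ ≤ a‖x₁‖‖x₂‖, B : X → Y a bounded linear operator such that the closed ball of radius b > 0 in Y is contained in the image under B of the closed unit ball of X, and C ∈ Y with ‖C‖ = c. If b² - 4ac ≥ 0, then the equation A(x,x) + Bx + C = 0 has a solution x ∈ X. -/
/-!
Choose a (nonlinear) right inverse `R` of `B` with `b‖R y‖ ≤ ‖y‖` and iterate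
`x₀ = 0`, `xₙ₊₁ = xₙ - R(A(xₙ,xₙ) + Bxₙ + C)`. Then `Bxₙ₊₁ = -(A(xₙ,xₙ) + C)`, so by symmetry the
new residual is `A(xₙ₊₁ + xₙ, xₙ₊₁ - xₙ)`. The scalar recursion `sₙ₊₁ = (a sₙ² + c)/b`, `s₀ = 0`,
majorizes this: `‖xₙ‖ ≤ sₙ` and `‖residual(xₙ)‖ ≤ b(sₙ₊₁ - sₙ)`, because
`a(sₙ₊₁ + sₙ)(sₙ₊₁ - sₙ) = b(sₙ₊₂ - sₙ₊₁)`. When `b² ≥ 4ac` the quadratic `at² - bt + c` has a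
nonnegative root, which bounds the increasing sequence `sₙ`; hence `∑ ‖xₙ₊₁ - xₙ‖ < ∞`, the iterates
converge, and the residuals tend to `0`.
-/

open Filter Topology Metric

noncomputable def quadMajorant (a b c : ℝ) : ℕ → ℝ
  | 0 => 0
  | n + 1 => (a * quadMajorant a b c n ^ 2 + c) / b

section Majorant

variable {a b c : ℝ}

lemma quadMajorant_succ (n : ℕ) :
    quadMajorant a b c (n + 1) = (a * quadMajorant a b c n ^ 2 + c) / b :=
  rfl

lemma quadMajorant_nonneg (ha : 0 ≤ a) (hb : 0 ≤ b) (hc : 0 ≤ c) :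
    ∀ n, 0 ≤ quadMajorant a b c n
  | 0 => le_rfl
  | n + 1 => by rw [quadMajorant_succ]; positivity

lemma quadMajorant_monotone (ha : 0 ≤ a) (hb : 0 ≤ b) (hc : 0 ≤ c) :
    Monotone (quadMajorant a b c) := by
  refine monotone_nat_of_le_succ fun n => ?_
  induction n with
  | zero => exact quadMajorant_nonneg ha hb hc 1
  | succ n ih =>
    rw [quadMajorant_succ n, quadMajorant_succ (n + 1)]
    have := quadMajorant_nonneg ha hb hc n
    gcongr

lemma quadMajorant_le (ha : 0 ≤ a) (hb : 0 < b) (hc : 0 ≤ c) {r : ℝ} (hr : 0 ≤ r)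
    (hroot : a * r ^ 2 + c ≤ b * r) : ∀ n, quadMajorant a b c n ≤ r
  | 0 => hr
  | n + 1 => by
    have := quadMajorant_le ha hb hc hr hroot n
    have := quadMajorant_nonneg ha hb.le hc n
    rw [quadMajorant_succ, div_le_iff₀' hb]
    calc a * quadMajorant a b c n ^ 2 + c ≤ a * r ^ 2 + c := by gcongr
      _ ≤ b * r := hroot

lemma mul_quadMajorant_succ_sub (hb : b ≠ 0) (n : ℕ) :
    b * (quadMajorant a b c (n + 2) - quadMajorant a b c (n + 1)) =
      a * (quadMajorant a b c (n + 1) ^ 2 - quadMajorant a b c n ^ 2) := by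
  rw [quadMajorant_succ (n + 1), quadMajorant_succ n]
  field_simp
  ring

end Majorant

lemma exists_nonneg_root_of_discrim_nonneg {a b c : ℝ} (ha : 0 < a) (hb : 0 ≤ b)
    (hD : 0 ≤ b ^ 2 - 4 * a * c) : ∃ r, 0 ≤ r ∧ a * r ^ 2 + c = b * r := by
  set D := b ^ 2 - 4 * a * c
  have hsq := Real.sq_sqrt hD
  refine ⟨(b + √D) / (2 * a), by positivity, ?_⟩
  field_simp
  nlinarith [hsq]

lemma Monotone.summable_sub_of_le {f : ℕ → ℝ} (hf : Monotone f) {M : ℝ} (hM : ∀ n, f n ≤ M) :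
    Summable fun n => f (n + 1) - f n :=
  summable_of_sum_range_le (c := M - f 0) (fun n => sub_nonneg.2 (hf n.le_succ))
    fun n => by rw [Finset.sum_range_sub]; linarith [hM n]

lemma exists_preimage_norm_le_of_closedBall_subset {X Y F : Type*}
    [NormedAddCommGroup X] [NormedSpace ℝ X] [NormedAddCommGroup Y] [NormedSpace ℝ Y]
    [FunLike F X Y] [LinearMapClass F ℝ X Y] (B : F) {b : ℝ} (hb : 0 < b)
    (hB : closedBall (0 : Y) b ⊆ B '' closedBall (0 : X) 1) (y : Y) :
    ∃ x, B x = y ∧ b * ‖x‖ ≤ ‖y‖ := by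
  rcases eq_or_ne y 0 with rfl | hy
  · exact ⟨0, map_zero B, by simp⟩
  have hy' : 0 < ‖y‖ := norm_pos_iff.2 hy
  obtain ⟨x, hx, hBx⟩ : (b / ‖y‖) • y ∈ B '' closedBall 0 1 := hB <| by
    rw [mem_closedBall_zero_iff, norm_smul, Real.norm_of_nonneg (by positivity),
      div_mul_cancel₀ _ hy'.ne']
  rw [mem_closedBall_zero_iff] at hx
  refine ⟨(‖y‖ / b) • x, ?_, ?_⟩
  · rw [map_smul, hBx, smul_smul, div_mul_div_cancel₀ hb.ne', div_self hy'.ne', one_smul]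
  · rw [norm_smul, Real.norm_of_nonneg (by positivity), ← mul_assoc, mul_div_cancel₀ _ hb.ne']
    exact mul_le_of_le_one_right hy'.le hx

lemma ContinuousLinearMap.apply_self_sub_apply_self {𝕜 X Y : Type*} [NontriviallyNormedField 𝕜]
    [NormedAddCommGroup X] [NormedSpace 𝕜 X] [NormedAddCommGroup Y] [NormedSpace 𝕜 Y]
    (A : X →L[𝕜] X →L[𝕜] Y) (hA : ∀ u v, A u v = A v u) (u v : X) :
    A u u - A v v = A (u + v) (u - v) := by
  simp only [map_add, map_sub, add_apply, hA v u]
  abel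

section Iteration

variable {X Y : Type*} [NormedAddCommGroup X] [NormedSpace ℝ X] [NormedAddCommGroup Y]
  [NormedSpace ℝ Y] (A : X →L[ℝ] X →L[ℝ] Y) (B : X →L[ℝ] Y) (C : Y) (R : Y → X)

noncomputable def quadResidual (x : X) : Y := A x x + B x + C

noncomputable def quadIterate : ℕ → X
  | 0 => 0
  | n + 1 => quadIterate n - R (quadResidual A B C (quadIterate n))

variable {A B C R} {a b : ℝ}

lemma quadResidual_quadIterate_succ (hA : ∀ u v, A u v = A v u) (hR : ∀ y, B (R y) = y)
    (n : ℕ) : quadResidual A B C (quadIterate A B C R (n + 1)) =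
      A (quadIterate A B C R (n + 1) + quadIterate A B C R n)
        (quadIterate A B C R (n + 1) - quadIterate A B C R n) := by
  set x := quadIterate A B C R n
  set x' := quadIterate A B C R (n + 1)
  have hBx' : B x' = B x - quadResidual A B C x := by
    rw [show x' = x - R (quadResidual A B C x) from rfl, map_sub, hR]
  rw [← A.apply_self_sub_apply_self hA, quadResidual, hBx', quadResidual]
  abel

lemma norm_quadIterate_succ_sub_le (hb : 0 < b) (hRb : ∀ y, b * ‖R y‖ ≤ ‖y‖) {n : ℕ} {t : ℝ}
    (ht : ‖quadResidual A B C (quadIterate A B C R n)‖ ≤ b * t) :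
    ‖quadIterate A B C R (n + 1) - quadIterate A B C R n‖ ≤ t := by
  refine le_of_mul_le_mul_left ?_ hb
  rw [quadIterate, sub_sub_cancel_left, norm_neg]
  exact (hRb _).trans ht

lemma quadIterate_majorized (ha : 0 ≤ a) (hb : 0 < b) (hA : ∀ u v, A u v = A v u)
    (hAbound : ∀ u v, ‖A u v‖ ≤ a * ‖u‖ * ‖v‖) (hR : ∀ y, B (R y) = y)
    (hRb : ∀ y, b * ‖R y‖ ≤ ‖y‖) (n : ℕ) :
    ‖quadIterate A B C R n‖ ≤ quadMajorant a b ‖C‖ n ∧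
      ‖quadResidual A B C (quadIterate A B C R n)‖ ≤
        b * (quadMajorant a b ‖C‖ (n + 1) - quadMajorant a b ‖C‖ n) := by
  set x := quadIterate A B C R
  set s := quadMajorant a b ‖C‖
  induction n with
  | zero =>
    refine ⟨by simp [x, s, quadIterate, quadMajorant], le_of_eq ?_⟩
    simp [x, s, quadIterate, quadMajorant, quadResidual, mul_div_cancel₀ _ hb.ne']
  | succ n ih =>
    have hstep : ‖x (n + 1) - x n‖ ≤ s (n + 1) - s n := norm_quadIterate_succ_sub_le hb hRb ih.2
    have hnorm : ‖x (n + 1)‖ ≤ s (n + 1) := by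
      calc ‖x (n + 1)‖ ≤ ‖x n‖ + ‖x (n + 1) - x n‖ := norm_le_insert' _ _
        _ ≤ s (n + 1) := by linarith [ih.1]
    have hs : 0 ≤ s (n + 1) + s n :=
      add_nonneg ((norm_nonneg _).trans hnorm) ((norm_nonneg _).trans ih.1)
    refine ⟨hnorm, ?_⟩
    rw [quadResidual_quadIterate_succ hA hR, mul_quadMajorant_succ_sub hb.ne']
    calc _ ≤ a * ‖x (n + 1) + x n‖ * ‖x (n + 1) - x n‖ := hAbound _ _
      _ ≤ a * (s (n + 1) + s n) * (s (n + 1) - s n) := by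
        gcongr
        exact (norm_add_le _ _).trans (add_le_add hnorm ih.1)
      _ = a * (s (n + 1) ^ 2 - s n ^ 2) := by ring

end Iteration

lemma exists_quadResidual_eq_zero {X Y : Type*} [NormedAddCommGroup X] [NormedSpace ℝ X]
    [CompleteSpace X] [NormedAddCommGroup Y] [NormedSpace ℝ Y] {A : X →L[ℝ] X →L[ℝ] Y}
    {B : X →L[ℝ] Y} {C : Y} {R : Y → X} {a b r : ℝ} (ha : 0 ≤ a) (hb : 0 < b)
    (hA : ∀ u v, A u v = A v u) (hAbound : ∀ u v, ‖A u v‖ ≤ a * ‖u‖ * ‖v‖)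
    (hR : ∀ y, B (R y) = y) (hRb : ∀ y, b * ‖R y‖ ≤ ‖y‖) (hr : 0 ≤ r)
    (hroot : a * r ^ 2 + ‖C‖ ≤ b * r) :
    ∃ x, quadResidual A B C x = 0 := by
  set x := quadIterate A B C R
  set s := quadMajorant a b ‖C‖
  have hmaj := quadIterate_majorized (C := C) ha hb hA hAbound hR hRb
  have hsum : Summable fun n => s (n + 1) - s n :=
    (quadMajorant_monotone ha hb.le (norm_nonneg C)).summable_sub_of_le
      (quadMajorant_le ha hb (norm_nonneg C) hr hroot)
  have hcauchy : CauchySeq x := by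
    refine cauchySeq_of_dist_le_of_summable _ (fun n => ?_) hsum
    rw [dist_comm, dist_eq_norm]
    exact norm_quadIterate_succ_sub_le hb hRb (hmaj n).2
  obtain ⟨L, hL⟩ := cauchySeq_tendsto_of_complete hcauchy
  have hcont : Continuous (quadResidual A B C) := by
    unfold quadResidual
    fun_prop
  have hzero : Tendsto (fun n => quadResidual A B C (x n)) atTop (𝓝 0) :=
    squeeze_zero_norm (fun n => (hmaj n).2) (by simpa using hsum.tendsto_atTop_zero.const_mul b)
  exact ⟨L, tendsto_nhds_unique ((hcont.tendsto L).comp hL) hzero⟩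

theorem quadratic_equation_solvable_general
    {X Y : Type*} [NormedAddCommGroup X] [NormedSpace ℝ X] [CompleteSpace X]
    [NormedAddCommGroup Y] [NormedSpace ℝ Y]
    (A : X →L[ℝ] X →L[ℝ] Y) (a : ℝ) (ha : 0 < a)
    (hAbound : ∀ x₁ x₂ : X, ‖A x₁ x₂‖ ≤ a * ‖x₁‖ * ‖x₂‖)
    (hAsymm : ∀ x₁ x₂ : X, A x₁ x₂ = A x₂ x₁)
    (B : X →L[ℝ] Y) (b : ℝ) (hb : 0 < b)
    (hBcover : Metric.closedBall (0 : Y) b ⊆ B '' Metric.closedBall (0 : X) 1)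
    (C : Y) (c : ℝ) (hc : ‖C‖ = c)
    (hD : b ^ 2 - 4 * a * c ≥ 0) :
    ∃ x : X, A x x + B x + C = 0 := by
  choose R hR hRb using exists_preimage_norm_le_of_closedBall_subset B hb hBcover
  obtain ⟨r, hr, hroot⟩ := exists_nonneg_root_of_discrim_nonneg ha hb.le hD
  subst hc
  exact exists_quadResidual_eq_zero ha.le hb hAsymm hAbound hR hRb hr hroot.le

/-- Quadratic equation in Banach spaces: if `A` is a continuous symmetric bilinear map
bounded by `a`, `B` a bounded linear operator covering the ball of radius `b > 0`,
`C` an element of norm `c`, and `b² - 4ac ≥ 0`, then `A(x,x) + Bx + C = 0` has a solution. -/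
theorem quadratic_equation_solvable
    {X Y : Type*} [NormedAddCommGroup X] [NormedSpace ℝ X] [CompleteSpace X]
    [NormedAddCommGroup Y] [NormedSpace ℝ Y] [CompleteSpace Y]
    (A : X →L[ℝ] X →L[ℝ] Y) (a : ℝ) (ha : 0 < a)
    (hAbound : ∀ x₁ x₂ : X, ‖A x₁ x₂‖ ≤ a * ‖x₁‖ * ‖x₂‖)
    (hAsymm : ∀ x₁ x₂ : X, A x₁ x₂ = A x₂ x₁)
    (B : X →L[ℝ] Y) (b : ℝ) (hb : 0 < b)
    (hBcover : Metric.closedBall (0 : Y) b ⊆ B '' Metric.closedBall (0 : X) 1)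
    (C : Y) (c : ℝ) (hc : ‖C‖ = c)
    (hD : b ^ 2 - 4 * a * c ≥ 0) :
    ∃ x : X, A x x + B x + C = 0 :=
  quadratic_equation_solvable_general A a ha hAbound hAsymm B b hb hBcover C c hc hD
end

section
/- Let X, Y be Banach spaces, x₀ ∈ X, r ∈ (0,∞], I = [τ₀, τ₀ + r), ψ ∈ C(I) non-decreasing, Ψ : B(x₀, 2r) → Y continuous and a ψ-covering, and Φ : B(x₀, r) → Y continuously Fréchet differentiable. Suppose there is an increasing function φ ∈ C¹(I) with ‖Φ(x₀) − Ψ(x₀)‖ ≤ φ(τ₀) − ψ(τ₀), and such that for each τ ∈ I, ‖x − x₀‖ ≤ τ − τ₀ implies ‖Φ'(x)‖ ≤ φ'(τ). If the equation ψ(τ) = φ(τ) has a smallest solution τ* in I, then there exists x* with ‖x* − x₀‖ ≤ τ* − τ₀ and Φ(x*) = Ψ(x*). -/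
/-!
Starting from `(τ₀, x₀)`, iterate: given `τ` and `x` with `‖Φ x - Ψ x‖ ≤ φ τ - ψ τ`, choose
`σ ≥ τ` with `ψ σ = φ τ` by the intermediate value theorem, and use the `ψ`-covering property to
find `x'` with `Ψ x' = Φ x` and `‖x' - x‖ ≤ σ - τ`. Since `φ` majorizes `Φ` along the segment,
`‖Φ x' - Ψ x'‖ = ‖Φ x' - Φ x‖ ≤ φ σ - φ τ = φ σ - ψ σ`, so the invariant persists. The `τ`'s
increase to some `l ≤ τ*` and dominate the increments of the `x`'s, which therefore converge.
Passing to the limit in `ψ τₙ₊₁ = φ τₙ` makes `l` a root, so `l = τ*` by minimality, and the gap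
`φ - ψ` vanishes there.
-/

open Metric Set Filter Topology

theorem exists_seq_of_forall_exists {α : Type*} {P : α → Prop} {R : α → α → Prop} {a : α}
    (ha : P a) (h : ∀ a, P a → ∃ b, P b ∧ R a b) :
    ∃ u : ℕ → α, u 0 = a ∧ ∀ n, P (u n) ∧ R (u n) (u (n + 1)) := by
  choose f hf using h
  let g : {a // P a} → {a // P a} := fun p => ⟨f p.1 p.2, (hf p.1 p.2).1⟩
  refine ⟨fun n => (g^[n] ⟨a, ha⟩).1, rfl, fun n => ⟨(g^[n] ⟨a, ha⟩).2, ?_⟩⟩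
  simp only [Function.iterate_succ_apply']
  exact (hf _ _).2

theorem cauchySeq_of_dist_succ_le_sub {α : Type*} [PseudoMetricSpace α] {x : ℕ → α}
    {τ : ℕ → ℝ} {c : ℝ} (hτ : ∀ n, τ n ≤ c) (hx : ∀ n, dist (x n) (x (n + 1)) ≤ τ (n + 1) - τ n) :
    CauchySeq x := by
  refine cauchySeq_of_dist_le_of_summable _ hx (summable_of_sum_range_le (c := c - τ 0)
    (fun n => dist_nonneg.trans (hx n)) fun n => ?_)
  rw [Finset.sum_range_sub]
  linarith [hτ n]

theorem norm_add_smul_sub_sub_le {E : Type*} [SeminormedAddCommGroup E] [NormedSpace ℝ E]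
    {x₀ x x' : E} {a b t : ℝ} (hx : ‖x - x₀‖ ≤ a) (hx' : ‖x' - x‖ ≤ b) (ht : t ∈ Icc (0 : ℝ) 1) :
    ‖x + t • (x' - x) - x₀‖ ≤ a + t * b :=
  calc ‖x + t • (x' - x) - x₀‖ = ‖(x - x₀) + t • (x' - x)‖ := by congr 1; abel
    _ ≤ ‖x - x₀‖ + ‖t • (x' - x)‖ := norm_add_le _ _
    _ = ‖x - x₀‖ + t * ‖x' - x‖ := by rw [norm_smul, Real.norm_of_nonneg ht.1]
    _ ≤ a + t * b := add_le_add hx (mul_le_mul_of_nonneg_left hx' ht.1)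

theorem norm_sub_le_sub_of_norm_fderiv_le_deriv {E F : Type*} [NormedAddCommGroup E]
    [NormedSpace ℝ E] [NormedAddCommGroup F] [NormedSpace ℝ F]
    {Φ : E → F} {Φ' : E → E →L[ℝ] F} {φ φ' : ℝ → ℝ} {x x' : E} {τ τ' : ℝ}
    (hΦ : ∀ t ∈ Icc (0 : ℝ) 1, HasFDerivAt Φ (Φ' (x + t • (x' - x))) (x + t • (x' - x)))
    (hφ : ∀ t ∈ Icc (0 : ℝ) 1, HasDerivAt φ (φ' (τ + t * (τ' - τ))) (τ + t * (τ' - τ)))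
    (hbound : ∀ t ∈ Icc (0 : ℝ) 1, ‖Φ' (x + t • (x' - x))‖ ≤ φ' (τ + t * (τ' - τ)))
    (hxx' : ‖x' - x‖ ≤ τ' - τ) :
    ‖Φ x' - Φ x‖ ≤ φ τ' - φ τ := by
  have hΦ_seg : ∀ t ∈ Icc (0 : ℝ) 1, HasDerivAt (fun t : ℝ => Φ (x + t • (x' - x)) - Φ x)
      (Φ' (x + t • (x' - x)) (x' - x)) t := fun t ht => by
    simpa using ((hΦ t ht).comp_hasDerivAt t
      (((hasDerivAt_id t).smul_const (x' - x)).const_add x)).sub_const (Φ x)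
  have hφ_seg : ∀ t ∈ Icc (0 : ℝ) 1, HasDerivAt (fun t : ℝ => φ (τ + t * (τ' - τ)) - φ τ)
      (φ' (τ + t * (τ' - τ)) * (τ' - τ)) t := fun t ht => by
    simpa using ((hφ t ht).comp t
      (((hasDerivAt_id t).mul_const (τ' - τ)).const_add τ)).sub_const (φ τ)
  have hbound_seg : ∀ t ∈ Ico (0 : ℝ) 1,
      ‖Φ' (x + t • (x' - x)) (x' - x)‖ ≤ φ' (τ + t * (τ' - τ)) * (τ' - τ) := fun t ht => by
    have hb := hbound t (Ico_subset_Icc_self ht)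
    exact ((Φ' _).le_of_opNorm_le hb _).trans
      (mul_le_mul_of_nonneg_left hxx' ((norm_nonneg _).trans hb))
  simpa using image_norm_le_of_norm_deriv_right_le_deriv_boundary'
    (fun t ht => (hΦ_seg t ht).continuousAt.continuousWithinAt)
    (fun t ht => (hΦ_seg t (Ico_subset_Icc_self ht)).hasDerivWithinAt) (by simp)
    (fun t ht => (hφ_seg t ht).continuousAt.continuousWithinAt)
    (fun t ht => (hφ_seg t (Ico_subset_Icc_self ht)).hasDerivWithinAt) hbound_seg
    (right_mem_Icc.2 zero_le_one)

section Coincidence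

variable {X Y : Type*} [NormedAddCommGroup X] [NormedSpace ℝ X] [NormedAddCommGroup Y]
  [NormedSpace ℝ Y] {x₀ : X} {τ₀ τ₁ : ℝ} {ψ φ φ' : ℝ → ℝ} {Ψ Φ : X → Y} {Φ' : X → X →L[ℝ] Y}

theorem exists_step_of_covering (hψ : ContinuousOn ψ (Icc τ₀ τ₁))
    (hcover : ∀ τ σ, τ₀ ≤ τ → τ < σ → σ ≤ τ₁ → ∀ x ∈ closedBall x₀ (τ - τ₀),
      closedBall (Ψ x) (ψ σ - ψ τ) ⊆ Ψ '' closedBall x (σ - τ))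
    (hΦ : ∀ x ∈ closedBall x₀ (τ₁ - τ₀), HasFDerivAt Φ (Φ' x) x)
    (hφ : ∀ τ ∈ Icc τ₀ τ₁, HasDerivAt φ (φ' τ) τ) (hφ_mono : MonotoneOn φ (Icc τ₀ τ₁))
    (hbound : ∀ τ ∈ Icc τ₀ τ₁, ∀ x ∈ closedBall x₀ (τ - τ₀), ‖Φ' x‖ ≤ φ' τ)
    (hsol : ψ τ₁ = φ τ₁) {τ : ℝ} {x : X} (hτ : τ ∈ Icc τ₀ τ₁) (hx : x ∈ closedBall x₀ (τ - τ₀))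
    (hgap : ‖Φ x - Ψ x‖ ≤ φ τ - ψ τ) :
    ∃ σ x', σ ∈ Icc τ τ₁ ∧ x' ∈ closedBall x (σ - τ) ∧ ψ σ = φ τ ∧
      ‖Φ x' - Ψ x'‖ ≤ φ σ - ψ σ := by
  have hφτ : φ τ ∈ Icc (ψ τ) (ψ τ₁) :=
    ⟨by linarith [norm_nonneg (Φ x - Ψ x)],
      hsol ▸ hφ_mono hτ (right_mem_Icc.2 (hτ.1.trans hτ.2)) hτ.2⟩
  obtain ⟨σ, hσ, hψσ⟩ :=
    intermediate_value_Icc hτ.2 (hψ.mono (Icc_subset_Icc_left hτ.1)) hφτ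
  rcases hσ.1.eq_or_lt with rfl | hτσ
  · exact ⟨τ, x, hσ, mem_closedBall_self (sub_self τ).ge, hψσ, hgap⟩
  have hΦx : Φ x ∈ closedBall (Ψ x) (ψ σ - ψ τ) := by
    rwa [mem_closedBall_iff_norm, hψσ]
  obtain ⟨x', hx', hΨx'⟩ := hcover τ σ hτ.1 hτσ hσ.2 x hx hΦx
  rw [mem_closedBall_iff_norm] at hx hx'
  have hseg : ∀ t ∈ Icc (0 : ℝ) 1, τ + t * (σ - τ) ∈ Icc τ₀ τ₁ ∧
      x + t • (x' - x) ∈ closedBall x₀ (τ + t * (σ - τ) - τ₀) := fun t ht =>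
    ⟨⟨by nlinarith [ht.1, hσ.1, hτ.1], by nlinarith [ht.2, hσ.1, hσ.2]⟩,
      mem_closedBall_iff_norm.2 <| (norm_add_smul_sub_sub_le hx hx' ht).trans_eq (by ring)⟩
  have hmvt : ‖Φ x' - Φ x‖ ≤ φ σ - φ τ :=
    norm_sub_le_sub_of_norm_fderiv_le_deriv
      (fun t ht => hΦ _ (closedBall_subset_closedBall (by linarith [(hseg t ht).1.2])
        (hseg t ht).2))
      (fun t ht => hφ _ (hseg t ht).1) (fun t ht => hbound _ (hseg t ht).1 _ (hseg t ht).2) hx'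
  refine ⟨σ, x', hσ, mem_closedBall_iff_norm.2 hx', hψσ, ?_⟩
  rw [hΨx', hψσ]
  linarith

theorem exists_seq_of_covering (hτ₁ : τ₀ ≤ τ₁) (hψ : ContinuousOn ψ (Icc τ₀ τ₁))
    (hcover : ∀ τ σ, τ₀ ≤ τ → τ < σ → σ ≤ τ₁ → ∀ x ∈ closedBall x₀ (τ - τ₀),
      closedBall (Ψ x) (ψ σ - ψ τ) ⊆ Ψ '' closedBall x (σ - τ))
    (hΦ : ∀ x ∈ closedBall x₀ (τ₁ - τ₀), HasFDerivAt Φ (Φ' x) x)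
    (hφ : ∀ τ ∈ Icc τ₀ τ₁, HasDerivAt φ (φ' τ) τ) (hφ_mono : MonotoneOn φ (Icc τ₀ τ₁))
    (hbound : ∀ τ ∈ Icc τ₀ τ₁, ∀ x ∈ closedBall x₀ (τ - τ₀), ‖Φ' x‖ ≤ φ' τ)
    (hinit : ‖Φ x₀ - Ψ x₀‖ ≤ φ τ₀ - ψ τ₀) (hsol : ψ τ₁ = φ τ₁) :
    ∃ (τ : ℕ → ℝ) (x : ℕ → X), (∀ n, τ n ∈ Icc τ₀ τ₁) ∧ (∀ n, x n ∈ closedBall x₀ (τ n - τ₀)) ∧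
      (∀ n, ‖Φ (x n) - Ψ (x n)‖ ≤ φ (τ n) - ψ (τ n)) ∧ Monotone τ ∧
      (∀ n, dist (x n) (x (n + 1)) ≤ τ (n + 1) - τ n) ∧ (∀ n, ψ (τ (n + 1)) = φ (τ n)) := by
  obtain ⟨u, -, hu⟩ := exists_seq_of_forall_exists (a := (τ₀, x₀))
    (P := fun p : ℝ × X => p.1 ∈ Icc τ₀ τ₁ ∧ p.2 ∈ closedBall x₀ (p.1 - τ₀) ∧
      ‖Φ p.2 - Ψ p.2‖ ≤ φ p.1 - ψ p.1)
    (R := fun p q => p.1 ≤ q.1 ∧ dist p.2 q.2 ≤ q.1 - p.1 ∧ ψ q.1 = φ p.1)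
    ⟨left_mem_Icc.2 hτ₁, mem_closedBall_self (sub_self τ₀).ge, hinit⟩ <| by
      rintro ⟨τ, x⟩ ⟨hτ, hx, hgap⟩
      obtain ⟨σ, x', hσ, hx', hψσ, hgap'⟩ :=
        exists_step_of_covering hψ hcover hΦ hφ hφ_mono hbound hsol hτ hx hgap
      rw [mem_closedBall] at hx hx'
      exact ⟨(σ, x'), ⟨⟨hτ.1.trans hσ.1, hσ.2⟩, mem_closedBall.2 <|
        (dist_triangle _ x _).trans (by linarith), hgap'⟩, hσ.1, dist_comm x x' ▸ hx', hψσ⟩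
  exact ⟨fun n => (u n).1, fun n => (u n).2, fun n => (hu n).1.1, fun n => (hu n).1.2.1,
    fun n => (hu n).1.2.2, monotone_nat_of_le_succ fun n => (hu n).2.1, fun n => (hu n).2.2.1,
    fun n => (hu n).2.2.2⟩

theorem exists_mem_closedBall_eq_of_covering [CompleteSpace X] (hτ₁ : τ₀ ≤ τ₁)
    (hψ : ContinuousOn ψ (Icc τ₀ τ₁)) (hΨ : ContinuousOn Ψ (closedBall x₀ (τ₁ - τ₀)))
    (hcover : ∀ τ σ, τ₀ ≤ τ → τ < σ → σ ≤ τ₁ → ∀ x ∈ closedBall x₀ (τ - τ₀),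
      closedBall (Ψ x) (ψ σ - ψ τ) ⊆ Ψ '' closedBall x (σ - τ))
    (hΦ : ∀ x ∈ closedBall x₀ (τ₁ - τ₀), HasFDerivAt Φ (Φ' x) x)
    (hφ : ∀ τ ∈ Icc τ₀ τ₁, HasDerivAt φ (φ' τ) τ) (hφ_mono : MonotoneOn φ (Icc τ₀ τ₁))
    (hbound : ∀ τ ∈ Icc τ₀ τ₁, ∀ x ∈ closedBall x₀ (τ - τ₀), ‖Φ' x‖ ≤ φ' τ)
    (hinit : ‖Φ x₀ - Ψ x₀‖ ≤ φ τ₀ - ψ τ₀) (hsol : ψ τ₁ = φ τ₁)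
    (hmin : ∀ τ ∈ Icc τ₀ τ₁, ψ τ = φ τ → τ₁ ≤ τ) :
    ∃ x ∈ closedBall x₀ (τ₁ - τ₀), Φ x = Ψ x := by
  obtain ⟨τ, x, hτI, hx, hgap, hτ_mono, hdist, hψτ⟩ :=
    exists_seq_of_covering hτ₁ hψ hcover hΦ hφ hφ_mono hbound hinit hsol
  have hxB : ∀ n, x n ∈ closedBall x₀ (τ₁ - τ₀) := fun n =>
    closedBall_subset_closedBall (by linarith [(hτI n).2]) (hx n)
  obtain ⟨l, hl⟩ : ∃ l, Tendsto τ atTop (𝓝 l) :=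
    ⟨_, tendsto_atTop_ciSup hτ_mono ⟨τ₁, forall_mem_range.2 fun n => (hτI n).2⟩⟩
  obtain ⟨y, hy⟩ := cauchySeq_tendsto_of_complete
    (cauchySeq_of_dist_succ_le_sub (fun n => (hτI n).2) hdist)
  have hlI : l ∈ Icc τ₀ τ₁ := isClosed_Icc.mem_of_tendsto hl (.of_forall hτI)
  have hψl : Tendsto (ψ ∘ τ) atTop (𝓝 (ψ l)) :=
    (hψ l hlI).tendsto.comp (tendsto_nhdsWithin_iff.2 ⟨hl, .of_forall hτI⟩)
  have hφl : Tendsto (φ ∘ τ) atTop (𝓝 (φ l)) := (hφ l hlI).continuousAt.tendsto.comp hl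
  have hroot : ψ l = φ l :=
    tendsto_nhds_unique ((hψl.comp (tendsto_add_atTop_nat 1)).congr hψτ) hφl
  obtain rfl : l = τ₁ := le_antisymm hlI.2 (hmin l hlI hroot)
  have hyB : y ∈ closedBall x₀ (l - τ₀) := isClosed_closedBall.mem_of_tendsto hy (.of_forall hxB)
  have hΦy := (hΦ y hyB).continuousAt.tendsto.comp hy
  have hΨy := (hΨ y hyB).tendsto.comp (tendsto_nhdsWithin_iff.2 ⟨hy, .of_forall hxB⟩)
  have hgap_lim : ‖Φ y - Ψ y‖ ≤ 0 :=
    le_of_tendsto_of_tendsto' (hΦy.sub hΨy).norm (by simpa [hroot] using hφl.sub hψl) hgap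
  exact ⟨y, hyB, sub_eq_zero.1 (norm_le_zero_iff.1 hgap_lim)⟩

end Coincidence

theorem coincidence_main_general
    {X Y : Type*} [NormedAddCommGroup X] [NormedSpace ℝ X] [CompleteSpace X]
    [NormedAddCommGroup Y] [NormedSpace ℝ Y]
    (x₀ : X) (r : ENNReal) (τ₀ : ℝ)
    (ψ φ : ℝ → ℝ) (φ' : ℝ → ℝ)
    (Ψ Φ : X → Y) (Φ' : X → X →L[ℝ] Y)
    -- ψ continuous and non-decreasing on I :
    (hψcont : ContinuousOn ψ {τ | τ₀ ≤ τ ∧ ENNReal.ofReal (τ - τ₀) < r})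
    -- Ψ continuous on B(x₀, 2r) :
    (hΨcont : ContinuousOn Ψ {x | ENNReal.ofReal ‖x - x₀‖ < 2 * r})
    -- H1 : Ψ is a ψ-covering :
    (hΨcover : ∀ τ' τ'' : ℝ, τ₀ ≤ τ' → τ' < τ'' → ENNReal.ofReal (τ'' - τ₀) < r →
      ∀ x' : X, ENNReal.ofReal ‖x' - x₀‖ < r →
        closedBall (Ψ x') (ψ τ'' - ψ τ') ⊆ Ψ '' closedBall x' (τ'' - τ'))
    -- Φ is continuously Fréchet differentiable on B(x₀, r) :
    (hΦderiv : ∀ x : X, ENNReal.ofReal ‖x - x₀‖ < r → HasFDerivAt Φ (Φ' x) x)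
    -- φ is C¹ and increasing on I :
    (hφderiv : ∀ τ : ℝ, τ₀ ≤ τ → ENNReal.ofReal (τ - τ₀) < r → HasDerivAt φ (φ' τ) τ)
    (hφmono : StrictMonoOn φ {τ | τ₀ ≤ τ ∧ ENNReal.ofReal (τ - τ₀) < r})
    -- H2 :
    (hinit : ‖Φ x₀ - Ψ x₀‖ ≤ φ τ₀ - ψ τ₀)
    (hbound : ∀ τ : ℝ, τ₀ ≤ τ → ENNReal.ofReal (τ - τ₀) < r →
      ∀ x : X, ‖x - x₀‖ ≤ τ - τ₀ → ‖Φ' x‖ ≤ φ' τ)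
    -- τ* is the smallest solution in I of ψ(τ) = φ(τ) :
    (τ_star : ℝ) (hτ₀ : τ₀ ≤ τ_star) (hτr : ENNReal.ofReal (τ_star - τ₀) < r)
    (hsol : ψ τ_star = φ τ_star)
    (hmin : ∀ τ : ℝ, τ₀ ≤ τ → ENNReal.ofReal (τ - τ₀) < r → ψ τ = φ τ → τ_star ≤ τ) :
    ∃ x_star : X, ‖x_star - x₀‖ ≤ τ_star - τ₀ ∧ Φ x_star = Ψ x_star := by
  have hI : ∀ τ ∈ Icc τ₀ τ_star, ENNReal.ofReal (τ - τ₀) < r := fun τ hτ =>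
    (ENNReal.ofReal_le_ofReal (by linarith [hτ.2])).trans_lt hτr
  have hB : ∀ x ∈ closedBall x₀ (τ_star - τ₀), ENNReal.ofReal ‖x - x₀‖ < r := fun x hx =>
    (ENNReal.ofReal_le_ofReal (mem_closedBall_iff_norm.1 hx)).trans_lt hτr
  obtain ⟨x, hx, hΦΨ⟩ := exists_mem_closedBall_eq_of_covering hτ₀
    (hψcont.mono fun τ hτ => ⟨hτ.1, hI τ hτ⟩)
    (hΨcont.mono fun x hx => (hB x hx).trans_le (le_mul_of_one_le_left zero_le one_le_two))
    (fun τ σ hτ hτσ hσ x hx => hΨcover τ σ hτ hτσ (hI σ ⟨by linarith, hσ⟩) x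
      (hB x (closedBall_subset_closedBall (by linarith) hx)))
    (fun x hx => hΦderiv x (hB x hx)) (fun τ hτ => hφderiv τ hτ.1 (hI τ hτ))
    (hφmono.monotoneOn.mono fun τ hτ => ⟨hτ.1, hI τ hτ⟩)
    (fun τ hτ x hx => hbound τ hτ.1 (hI τ hτ) x (mem_closedBall_iff_norm.1 hx)) hinit hsol
    (fun τ hτ => hmin τ hτ.1 (hI τ hτ))
  exact ⟨x, mem_closedBall_iff_norm.1 hx, hΦΨ⟩

/-- Main coincidence theorem: if `Ψ` is a `ψ`-covering on `B(x₀, r)` and `Φ` is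
continuously Fréchet differentiable with `‖Φ(x₀) − Ψ(x₀)‖ ≤ φ(τ₀) − ψ(τ₀)` and
`‖x − x₀‖ ≤ τ − τ₀ → ‖Φ'(x)‖ ≤ φ'(τ)`, and the equation `ψ(τ) = φ(τ)` has a smallest
solution `τ*` in `I = [τ₀, τ₀ + r)`, then there is a coincidence point `x*` with
`‖x* − x₀‖ ≤ τ* − τ₀`. Here `r ∈ (0, ∞]` is encoded as `r : ENNReal`, and membership
`τ ∈ I` as `τ₀ ≤ τ ∧ ENNReal.ofReal (τ − τ₀) < r`. -/
theorem coincidence_main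
    {X Y : Type*} [NormedAddCommGroup X] [NormedSpace ℝ X] [CompleteSpace X]
    [NormedAddCommGroup Y] [NormedSpace ℝ Y] [CompleteSpace Y]
    (x₀ : X) (r : ENNReal) (hr : 0 < r) (τ₀ : ℝ)
    (ψ φ : ℝ → ℝ) (φ' : ℝ → ℝ)
    (Ψ Φ : X → Y) (Φ' : X → X →L[ℝ] Y)
    -- ψ continuous and non-decreasing on I :
    (hψcont : ContinuousOn ψ {τ | τ₀ ≤ τ ∧ ENNReal.ofReal (τ - τ₀) < r})
    (hψmono : MonotoneOn ψ {τ | τ₀ ≤ τ ∧ ENNReal.ofReal (τ - τ₀) < r})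
    -- Ψ continuous on B(x₀, 2r) :
    (hΨcont : ContinuousOn Ψ {x | ENNReal.ofReal ‖x - x₀‖ < 2 * r})
    -- H1 : Ψ is a ψ-covering :
    (hΨcover : ∀ τ' τ'' : ℝ, τ₀ ≤ τ' → τ' < τ'' → ENNReal.ofReal (τ'' - τ₀) < r →
      ∀ x' : X, ENNReal.ofReal ‖x' - x₀‖ < r →
        closedBall (Ψ x') (ψ τ'' - ψ τ') ⊆ Ψ '' closedBall x' (τ'' - τ'))
    -- Φ is continuously Fréchet differentiable on B(x₀, r) :
    (hΦderiv : ∀ x : X, ENNReal.ofReal ‖x - x₀‖ < r → HasFDerivAt Φ (Φ' x) x)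
    (hΦ'cont : ContinuousOn Φ' {x | ENNReal.ofReal ‖x - x₀‖ < r})
    -- φ is C¹ and increasing on I :
    (hφderiv : ∀ τ : ℝ, τ₀ ≤ τ → ENNReal.ofReal (τ - τ₀) < r → HasDerivAt φ (φ' τ) τ)
    (hφ'cont : ContinuousOn φ' {τ | τ₀ ≤ τ ∧ ENNReal.ofReal (τ - τ₀) < r})
    (hφmono : StrictMonoOn φ {τ | τ₀ ≤ τ ∧ ENNReal.ofReal (τ - τ₀) < r})
    -- H2 :
    (hinit : ‖Φ x₀ - Ψ x₀‖ ≤ φ τ₀ - ψ τ₀)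
    (hbound : ∀ τ : ℝ, τ₀ ≤ τ → ENNReal.ofReal (τ - τ₀) < r →
      ∀ x : X, ‖x - x₀‖ ≤ τ - τ₀ → ‖Φ' x‖ ≤ φ' τ)
    -- τ* is the smallest solution in I of ψ(τ) = φ(τ) :
    (τ_star : ℝ) (hτ₀ : τ₀ ≤ τ_star) (hτr : ENNReal.ofReal (τ_star - τ₀) < r)
    (hsol : ψ τ_star = φ τ_star)
    (hmin : ∀ τ : ℝ, τ₀ ≤ τ → ENNReal.ofReal (τ - τ₀) < r → ψ τ = φ τ → τ_star ≤ τ) :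
    ∃ x_star : X, ‖x_star - x₀‖ ≤ τ_star - τ₀ ∧ Φ x_star = Ψ x_star :=
  coincidence_main_general x₀ r τ₀ ψ φ φ' Ψ Φ Φ' hψcont hΨcont hΨcover hΦderiv hφderiv hφmono hinit
    hbound τ_star hτ₀ hτr hsol hmin
end

section
/- Under the hypotheses of the main coincidence theorem (Ψ a ψ-covering, Φ C¹ with ‖Φ(x₀) − Ψ(x₀)‖ ≤ φ(τ₀) − ψ(τ₀) and ‖Φ'(x)‖ ≤ φ'(τ) whenever ‖x − x₀‖ ≤ τ − τ₀), and given an increasing sequence (τⱼ) ⊂ [τ₀, τ*] with ψ(τⱼ₊₁) = φ(τⱼ), there exists a sequence (xⱼ) in X with x₀ the given base point, ‖xⱼ − x₀‖ ≤ τⱼ − τ₀, ‖xⱼ₊₁ − xⱼ‖ ≤ τⱼ₊₁ − τⱼ, and Ψ(xⱼ₊₁) = Φ(xⱼ) for all j. -/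
open Metric Set AffineMap

/-!
Starting from `x₀`, the points are built one at a time: given `xⱼ` with
`‖xⱼ − x₀‖ ≤ τⱼ − τ₀` and residual `‖Φ(xⱼ) − Ψ(xⱼ)‖ ≤ φ(τⱼ) − ψ(τⱼ) = ψ(τⱼ₊₁) − ψ(τⱼ)`,
the `ψ`-covering property yields `xⱼ₊₁` within `τⱼ₊₁ − τⱼ` of `xⱼ` with `Ψ(xⱼ₊₁) = Φ(xⱼ)`.
The residual bound propagates because `φ` majorizes `Φ` along the segment from `xⱼ` to `xⱼ₊₁`:
`‖Φ(xⱼ₊₁) − Φ(xⱼ)‖ ≤ φ(τⱼ₊₁) − φ(τⱼ)`, a mean value inequality comparing `‖Φ'‖` with `φ'`.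
-/

theorem exists_seq_of_forall_exists_step {α : Type*} {P : ℕ → α → Prop} {R : ℕ → α → α → Prop}
    {a : α} (h0 : P 0 a) (hstep : ∀ j y, P j y → ∃ z, P (j + 1) z ∧ R j y z) :
    ∃ x : ℕ → α, x 0 = a ∧ ∀ j, P j (x j) ∧ R j (x j) (x (j + 1)) := by
  choose! next hnextP hnextR using hstep
  let x : ℕ → α := fun j => Nat.rec a next j
  have hP : ∀ j, P j (x j) := fun j => by
    induction j with
    | zero => exact h0
    | succ j ih => exact hnextP j _ ih
  exact ⟨x, rfl, fun j => ⟨hP j, hnextR j _ (hP j)⟩⟩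

section MeanValue

variable {E F : Type*} [NormedAddCommGroup E] [NormedSpace ℝ E]
  [NormedAddCommGroup F] [NormedSpace ℝ F]

theorem norm_image_sub_le_of_norm_fderiv_le_deriv {Φ : E → F} {Φ' : E → E →L[ℝ] F}
    {φ φ' : ℝ → ℝ} {y z : E} {a b : ℝ} (hzy : ‖z - y‖ ≤ b - a)
    (hΦ : ∀ t ∈ Icc (0 : ℝ) 1, HasFDerivAt Φ (Φ' (lineMap y z t)) (lineMap y z t))
    (hφ : ∀ t ∈ Icc (0 : ℝ) 1, HasDerivAt φ (φ' (lineMap a b t)) (lineMap a b t))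
    (hbound : ∀ t ∈ Icc (0 : ℝ) 1, ‖Φ' (lineMap y z t)‖ ≤ φ' (lineMap a b t)) :
    ‖Φ z - Φ y‖ ≤ φ b - φ a := by
  have hf : ∀ t ∈ Icc (0 : ℝ) 1, HasDerivAt (fun s => Φ (lineMap y z s) - Φ y)
      (Φ' (lineMap y z t) (z - y)) t := fun t ht =>
    ((hΦ t ht).comp_hasDerivAt t hasDerivAt_lineMap).sub_const _
  have hB : ∀ t ∈ Icc (0 : ℝ) 1, HasDerivAt (fun s => φ (lineMap a b s) - φ a)
      (φ' (lineMap a b t) * (b - a)) t := fun t ht =>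
    ((hφ t ht).comp t hasDerivAt_lineMap).sub_const _
  have hf'B' : ∀ t ∈ Icc (0 : ℝ) 1, ‖Φ' (lineMap y z t) (z - y)‖ ≤ φ' (lineMap a b t) * (b - a) :=
    fun t ht => calc
      ‖Φ' (lineMap y z t) (z - y)‖ ≤ ‖Φ' (lineMap y z t)‖ * ‖z - y‖ := ContinuousLinearMap.le_opNorm _ _
      _ ≤ φ' (lineMap a b t) * (b - a) :=
        mul_le_mul (hbound t ht) hzy (norm_nonneg _) ((norm_nonneg _).trans (hbound t ht))
  have := image_norm_le_of_norm_deriv_right_le_deriv_boundary'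
    (fun t ht => (hf t ht).continuousAt.continuousWithinAt)
    (fun t ht => (hf t (Ico_subset_Icc_self ht)).hasDerivWithinAt)
    (by simp) (fun t ht => (hB t ht).continuousAt.continuousWithinAt)
    (fun t ht => (hB t (Ico_subset_Icc_self ht)).hasDerivWithinAt)
    (fun t ht => hf'B' t (Ico_subset_Icc_self ht)) (right_mem_Icc.2 zero_le_one)
  simpa using this

end MeanValue

section Covering

variable {X Y : Type*} [NormedAddCommGroup X] [NormedSpace ℝ X]
  [NormedAddCommGroup Y] [NormedSpace ℝ Y]
  {x₀ : X} {r : ENNReal} {τ₀ : ℝ} {ψ φ φ' : ℝ → ℝ} {Ψ Φ : X → Y} {Φ' : X → X →L[ℝ] Y}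

theorem norm_image_sub_le_of_majorant
    (hΦderiv : ∀ x : X, ENNReal.ofReal ‖x - x₀‖ < r → HasFDerivAt Φ (Φ' x) x)
    (hφderiv : ∀ τ : ℝ, τ₀ ≤ τ → ENNReal.ofReal (τ - τ₀) < r → HasDerivAt φ (φ' τ) τ)
    (hbound : ∀ τ : ℝ, τ₀ ≤ τ → ENNReal.ofReal (τ - τ₀) < r →
      ∀ x : X, ‖x - x₀‖ ≤ τ - τ₀ → ‖Φ' x‖ ≤ φ' τ)
    {τ' τ'' : ℝ} (hτ' : τ₀ ≤ τ') (hτ'τ'' : τ' ≤ τ'') (hτ'' : ENNReal.ofReal (τ'' - τ₀) < r)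
    {y z : X} (hy : ‖y - x₀‖ ≤ τ' - τ₀) (hzy : ‖z - y‖ ≤ τ'' - τ') :
    ‖Φ z - Φ y‖ ≤ φ τ'' - φ τ' := by
  have hσ : ∀ t ∈ Icc (0 : ℝ) 1, τ₀ ≤ lineMap τ' τ'' t ∧ lineMap τ' τ'' t ≤ τ'' := by
    intro t ⟨ht0, ht1⟩
    rw [lineMap_apply_ring']
    constructor <;> nlinarith
  have hσr : ∀ t ∈ Icc (0 : ℝ) 1, ENNReal.ofReal (lineMap τ' τ'' t - τ₀) < r := fun t ht =>
    (ENNReal.ofReal_le_ofReal (by linarith [hσ t ht])).trans_lt hτ''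
  have hu : ∀ t ∈ Icc (0 : ℝ) 1, ‖lineMap y z t - x₀‖ ≤ lineMap τ' τ'' t - τ₀ := by
    intro t ⟨ht0, ht1⟩
    rw [lineMap_apply_module', lineMap_apply_ring']
    calc ‖t • (z - y) + y - x₀‖ ≤ ‖t • (z - y)‖ + ‖y - x₀‖ := by
          rw [add_sub_assoc]; exact norm_add_le _ _
      _ ≤ t * (τ'' - τ') + (τ' - τ₀) := by
          rw [norm_smul, Real.norm_of_nonneg ht0]; gcongr
      _ = t * (τ'' - τ') + τ' - τ₀ := by ring
  exact norm_image_sub_le_of_norm_fderiv_le_deriv hzy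
    (fun t ht => hΦderiv _ ((ENNReal.ofReal_le_ofReal (hu t ht)).trans_lt (hσr t ht)))
    (fun t ht => hφderiv _ (hσ t ht).1 (hσr t ht))
    (fun t ht => hbound _ (hσ t ht).1 (hσr t ht) _ (hu t ht))

theorem exists_covering_step
    (hΨcover : ∀ τ' τ'' : ℝ, τ₀ ≤ τ' → τ' < τ'' → ENNReal.ofReal (τ'' - τ₀) < r →
      ∀ x' : X, ENNReal.ofReal ‖x' - x₀‖ < r →
        closedBall (Ψ x') (ψ τ'' - ψ τ') ⊆ Ψ '' closedBall x' (τ'' - τ'))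
    (hΦderiv : ∀ x : X, ENNReal.ofReal ‖x - x₀‖ < r → HasFDerivAt Φ (Φ' x) x)
    (hφderiv : ∀ τ : ℝ, τ₀ ≤ τ → ENNReal.ofReal (τ - τ₀) < r → HasDerivAt φ (φ' τ) τ)
    (hbound : ∀ τ : ℝ, τ₀ ≤ τ → ENNReal.ofReal (τ - τ₀) < r →
      ∀ x : X, ‖x - x₀‖ ≤ τ - τ₀ → ‖Φ' x‖ ≤ φ' τ)
    {τ' τ'' : ℝ} (hτ' : τ₀ ≤ τ') (hτ'τ'' : τ' < τ'') (hτ'' : ENNReal.ofReal (τ'' - τ₀) < r)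
    (hψφ : ψ τ'' = φ τ') {y : X} (hy : ‖y - x₀‖ ≤ τ' - τ₀) (hres : ‖Φ y - Ψ y‖ ≤ φ τ' - ψ τ') :
    ∃ z, (‖z - x₀‖ ≤ τ'' - τ₀ ∧ ‖Φ z - Ψ z‖ ≤ φ τ'' - ψ τ'') ∧
      ‖z - y‖ ≤ τ'' - τ' ∧ Ψ z = Φ y := by
  have hyr : ENNReal.ofReal ‖y - x₀‖ < r :=
    (ENNReal.ofReal_le_ofReal (by linarith)).trans_lt hτ''
  have hΦy : Φ y ∈ closedBall (Ψ y) (ψ τ'' - ψ τ') := by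
    rwa [mem_closedBall, dist_eq_norm, hψφ]
  obtain ⟨z, hzy, hΨz⟩ := hΨcover τ' τ'' hτ' hτ'τ'' hτ'' y hyr hΦy
  rw [mem_closedBall, dist_eq_norm] at hzy
  refine ⟨z, ⟨?_, ?_⟩, hzy, hΨz⟩
  · calc ‖z - x₀‖ ≤ ‖z - y‖ + ‖y - x₀‖ := norm_sub_le_norm_sub_add_norm_sub z y x₀
      _ ≤ τ'' - τ₀ := by linarith
  · calc ‖Φ z - Ψ z‖ = ‖Φ z - Φ y‖ := by rw [hΨz]
      _ ≤ φ τ'' - φ τ' :=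
        norm_image_sub_le_of_majorant hΦderiv hφderiv hbound hτ' hτ'τ''.le hτ'' hy hzy
      _ = φ τ'' - ψ τ'' := by rw [hψφ]

end Covering

theorem x_sequence_exists_general
    {X Y : Type*} [NormedAddCommGroup X] [NormedSpace ℝ X]
    [NormedAddCommGroup Y] [NormedSpace ℝ Y]
    (x₀ : X) (r : ENNReal) (τ₀ : ℝ)
    (ψ φ : ℝ → ℝ) (φ' : ℝ → ℝ)
    (Ψ Φ : X → Y) (Φ' : X → X →L[ℝ] Y)
    (hΨcover : ∀ τ' τ'' : ℝ, τ₀ ≤ τ' → τ' < τ'' → ENNReal.ofReal (τ'' - τ₀) < r →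
      ∀ x' : X, ENNReal.ofReal ‖x' - x₀‖ < r →
        closedBall (Ψ x') (ψ τ'' - ψ τ') ⊆ Ψ '' closedBall x' (τ'' - τ'))
    (hΦderiv : ∀ x : X, ENNReal.ofReal ‖x - x₀‖ < r → HasFDerivAt Φ (Φ' x) x)
    (hφderiv : ∀ τ : ℝ, τ₀ ≤ τ → ENNReal.ofReal (τ - τ₀) < r → HasDerivAt φ (φ' τ) τ)
    (hinit : ‖Φ x₀ - Ψ x₀‖ ≤ φ τ₀ - ψ τ₀)
    (hbound : ∀ τ : ℝ, τ₀ ≤ τ → ENNReal.ofReal (τ - τ₀) < r →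
      ∀ x : X, ‖x - x₀‖ ≤ τ - τ₀ → ‖Φ' x‖ ≤ φ' τ)
    (τ_star : ℝ) (hτr : ENNReal.ofReal (τ_star - τ₀) < r)
    (τ : ℕ → ℝ) (hτ0 : τ 0 = τ₀) (hτmono : StrictMono τ)
    (hτmem : ∀ j, τ j ∈ Set.Ico τ₀ τ_star)
    (hτrec : ∀ j, ψ (τ (j + 1)) = φ (τ j)) :
    ∃ x : ℕ → X, x 0 = x₀ ∧
      (∀ j, ‖x j - x₀‖ ≤ τ j - τ₀) ∧
      (∀ j, ‖x (j + 1) - x j‖ ≤ τ (j + 1) - τ j) ∧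
      (∀ j, Ψ (x (j + 1)) = Φ (x j)) := by
  have hτ_lt_r : ∀ j, ENNReal.ofReal (τ j - τ₀) < r := fun j =>
    (ENNReal.ofReal_le_ofReal (by linarith [(hτmem j).2])).trans_lt hτr
  obtain ⟨x, hx0, hx⟩ := exists_seq_of_forall_exists_step
    (P := fun j y => ‖y - x₀‖ ≤ τ j - τ₀ ∧ ‖Φ y - Ψ y‖ ≤ φ (τ j) - ψ (τ j))
    (R := fun j y z => ‖z - y‖ ≤ τ (j + 1) - τ j ∧ Ψ z = Φ y)
    (a := x₀) (by simpa [hτ0] using hinit)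
    (fun j _ hy => exists_covering_step hΨcover hΦderiv hφderiv hbound (hτmem j).1
      (hτmono j.lt_succ_self) (hτ_lt_r (j + 1)) (hτrec j) hy.1 hy.2)
  exact ⟨x, hx0, fun j => (hx j).1.1, fun j => (hx j).2.1, fun j => (hx j).2.2⟩

/-- The key lemma of the paper: under the hypotheses of the main coincidence theorem,
given a strictly increasing sequence `(τⱼ)` in `[τ₀, τ*)` with `ψ(τⱼ₊₁) = φ(τⱼ)`,
there is a sequence `(xⱼ)` with `x 0 = x₀`, `‖xⱼ − x₀‖ ≤ τⱼ − τ₀`,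
`‖xⱼ₊₁ − xⱼ‖ ≤ τⱼ₊₁ − τⱼ`, and `Ψ(xⱼ₊₁) = Φ(xⱼ)`. Here `r ∈ (0, ∞]` is `r : ENNReal`. -/
theorem x_sequence_exists
    {X Y : Type*} [NormedAddCommGroup X] [NormedSpace ℝ X] [CompleteSpace X]
    [NormedAddCommGroup Y] [NormedSpace ℝ Y] [CompleteSpace Y]
    (x₀ : X) (r : ENNReal) (hr : 0 < r) (τ₀ : ℝ)
    (ψ φ : ℝ → ℝ) (φ' : ℝ → ℝ)
    (Ψ Φ : X → Y) (Φ' : X → X →L[ℝ] Y)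
    (hψcont : ContinuousOn ψ {τ | τ₀ ≤ τ ∧ ENNReal.ofReal (τ - τ₀) < r})
    (hψmono : MonotoneOn ψ {τ | τ₀ ≤ τ ∧ ENNReal.ofReal (τ - τ₀) < r})
    (hΨcont : ContinuousOn Ψ {x | ENNReal.ofReal ‖x - x₀‖ < 2 * r})
    (hΨcover : ∀ τ' τ'' : ℝ, τ₀ ≤ τ' → τ' < τ'' → ENNReal.ofReal (τ'' - τ₀) < r →
      ∀ x' : X, ENNReal.ofReal ‖x' - x₀‖ < r →
        closedBall (Ψ x') (ψ τ'' - ψ τ') ⊆ Ψ '' closedBall x' (τ'' - τ'))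
    (hΦderiv : ∀ x : X, ENNReal.ofReal ‖x - x₀‖ < r → HasFDerivAt Φ (Φ' x) x)
    (hΦ'cont : ContinuousOn Φ' {x | ENNReal.ofReal ‖x - x₀‖ < r})
    (hφderiv : ∀ τ : ℝ, τ₀ ≤ τ → ENNReal.ofReal (τ - τ₀) < r → HasDerivAt φ (φ' τ) τ)
    (hφmono : StrictMonoOn φ {τ | τ₀ ≤ τ ∧ ENNReal.ofReal (τ - τ₀) < r})
    (hinit : ‖Φ x₀ - Ψ x₀‖ ≤ φ τ₀ - ψ τ₀)
    (hbound : ∀ τ : ℝ, τ₀ ≤ τ → ENNReal.ofReal (τ - τ₀) < r →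
      ∀ x : X, ‖x - x₀‖ ≤ τ - τ₀ → ‖Φ' x‖ ≤ φ' τ)
    (τ_star : ℝ) (hτr : ENNReal.ofReal (τ_star - τ₀) < r)
    (τ : ℕ → ℝ) (hτ0 : τ 0 = τ₀) (hτmono : StrictMono τ)
    (hτmem : ∀ j, τ j ∈ Set.Ico τ₀ τ_star)
    (hτrec : ∀ j, ψ (τ (j + 1)) = φ (τ j)) :
    ∃ x : ℕ → X, x 0 = x₀ ∧
      (∀ j, ‖x j - x₀‖ ≤ τ j - τ₀) ∧
      (∀ j, ‖x (j + 1) - x j‖ ≤ τ (j + 1) - τ j) ∧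
      (∀ j, Ψ (x (j + 1)) = Φ (x j)) :=
  x_sequence_exists_general x₀ r τ₀ ψ φ φ' Ψ Φ Φ' hΨcover hΦderiv hφderiv hinit hbound τ_star hτr τ
    hτ0 hτmono hτmem hτrec
end

section
/- Kantorovich fixed point form: Let X be a Banach space, x₀ ∈ X, r > 0, Φ : B(x₀, r) → X continuously Fréchet differentiable, and φ ∈ C¹([τ₀, τ₀ + r)) increasing with ‖Φ(x₀) − x₀‖ ≤ φ(τ₀) − τ₀ and ‖Φ'(x)‖ ≤ φ'(τ) whenever ‖x − x₀‖ ≤ τ − τ₀. If the equation τ = φ(τ) has a smallest solution τ* ∈ [τ₀, τ₀ + r), then Φ has a fixed point x* with ‖x* − x₀‖ ≤ τ* − τ₀. -/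
open Metric

lemma kantorovich_mvt_step
    {X : Type*} [NormedAddCommGroup X] [NormedSpace ℝ X]
    {x₀ : X} {r τ₀ : ℝ}
    {Φ : X → X} {Φ' : X → X →L[ℝ] X} {φ φ' : ℝ → ℝ}
    (hΦderiv : ∀ x ∈ ball x₀ r, HasFDerivAt Φ (Φ' x) x)
    (hφderiv : ∀ τ ∈ Set.Ico τ₀ (τ₀ + r), HasDerivAt φ (φ' τ) τ)
    (hbound : ∀ τ ∈ Set.Ico τ₀ (τ₀ + r), ∀ x : X, ‖x - x₀‖ ≤ τ - τ₀ → ‖Φ' x‖ ≤ φ' τ)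
    {a b : X} {s t : ℝ} (hs : τ₀ ≤ s) (ht : t < τ₀ + r) (hst : s ≤ t)
    (ha : ‖a - x₀‖ ≤ s - τ₀) (hab : ‖b - a‖ ≤ t - s) :
    ‖Φ b - Φ a‖ ≤ φ t - φ s := by
  set v : X := b - a with hv
  set y : ℝ → X := fun u => a + u • v with hy
  set τ : ℝ → ℝ := fun u => s + u * (t - s) with hτ
  have hτmem : ∀ u ∈ Set.Icc (0:ℝ) 1, τ u ∈ Set.Ico τ₀ (τ₀ + r) := by
    intro u hu
    constructor
    · have : 0 ≤ u * (t - s) := mul_nonneg hu.1 (by linarith)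
      simp only [hτ]; linarith
    · have : u * (t - s) ≤ 1 * (t - s) := by
        apply mul_le_mul_of_nonneg_right hu.2 (by linarith)
      simp only [hτ]; nlinarith
  have hymem : ∀ u ∈ Set.Icc (0:ℝ) 1, ‖y u - x₀‖ ≤ τ u - τ₀ := by
    intro u hu
    have h1 : ‖y u - x₀‖ ≤ ‖a - x₀‖ + ‖u • v‖ := by
      have : y u - x₀ = (a - x₀) + u • v := by simp [hy]; abel
      rw [this]; exact norm_add_le _ _
    have h2 : ‖u • v‖ ≤ u * (t - s) := by
      rw [norm_smul, Real.norm_eq_abs, abs_of_nonneg hu.1]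
      exact mul_le_mul_of_nonneg_left hab hu.1
    simp only [hτ]; linarith
  have hyball : ∀ u ∈ Set.Icc (0:ℝ) 1, y u ∈ ball x₀ r := by
    intro u hu
    rw [mem_ball, dist_eq_norm]
    have := hymem u hu
    have := (hτmem u hu).2
    linarith
  have hyderiv : ∀ u : ℝ, HasDerivAt y v u := by
    intro u
    have : HasDerivAt (fun u : ℝ => u • v) ((1:ℝ) • v) u :=
      (hasDerivAt_id u).smul_const v
    simpa [hy] using this.const_add a
  have hτderiv : ∀ u : ℝ, HasDerivAt τ (t - s) u := by
    intro u
    have : HasDerivAt (fun u : ℝ => u * (t - s)) (1 * (t - s)) u :=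
      (hasDerivAt_id u).mul_const (t - s)
    simpa [hτ] using this.const_add s
  -- f and B
  set f : ℝ → X := fun u => Φ (y u) - Φ a with hf
  set B : ℝ → ℝ := fun u => φ (τ u) - φ s with hB
  have hfderiv : ∀ u ∈ Set.Icc (0:ℝ) 1, HasDerivAt f ((Φ' (y u)) v) u := by
    intro u hu
    have h1 : HasDerivAt (fun w => Φ (y w)) ((Φ' (y u)) v) u :=
      (hΦderiv (y u) (hyball u hu)).comp_hasDerivAt u (hyderiv u)
    simpa [hf] using h1.sub_const (Φ a)
  have hBderiv : ∀ u ∈ Set.Icc (0:ℝ) 1, HasDerivAt B (φ' (τ u) * (t - s)) u := by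
    intro u hu
    have h1 : HasDerivAt (fun w => φ (τ w)) (φ' (τ u) * (t - s)) u :=
      (hφderiv (τ u) (hτmem u hu)).comp u (hτderiv u)
    simpa [hB] using h1.sub_const (φ s)
  have hboundf : ∀ u ∈ Set.Ico (0:ℝ) 1, ‖(Φ' (y u)) v‖ ≤ φ' (τ u) * (t - s) := by
    intro u hu
    have hu' : u ∈ Set.Icc (0:ℝ) 1 := ⟨hu.1, hu.2.le⟩
    have h1 : ‖Φ' (y u)‖ ≤ φ' (τ u) :=
      hbound (τ u) (hτmem u hu') (y u) (hymem u hu')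
    calc ‖(Φ' (y u)) v‖ ≤ ‖Φ' (y u)‖ * ‖v‖ := (Φ' (y u)).le_opNorm v
      _ ≤ φ' (τ u) * (t - s) :=
        mul_le_mul h1 hab (norm_nonneg _) ((norm_nonneg _).trans h1)
  have key := image_norm_le_of_norm_deriv_right_le_deriv_boundary'
    (f := f) (f' := fun u => (Φ' (y u)) v) (a := 0) (b := 1)
    (fun u hu => (hfderiv u hu).continuousAt.continuousWithinAt)
    (fun u hu => (hfderiv u ⟨hu.1, hu.2.le⟩).hasDerivWithinAt.mono (Set.Ici_subset_Ici.mpr le_rfl) |>.mono (fun z hz => hz) )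
    (B := B) (B' := fun u => φ' (τ u) * (t - s))
    (by simp [hf, hB, hy, hτ])
    (fun u hu => (hBderiv u hu).continuousAt.continuousWithinAt)
    (fun u hu => (hBderiv u ⟨hu.1, hu.2.le⟩).hasDerivWithinAt)
    hboundf
  have := key (Set.right_mem_Icc.mpr zero_le_one)
  have hb : a + v = b := by simp [hv]
  simpa [hf, hB, hy, hτ, hb] using this
open Metric

/-- Kantorovich's fixed point theorem: if `Φ : B(x₀, r) → X` is continuously Fréchet
differentiable, `φ` is increasing and C¹ on `I = [τ₀, τ₀ + r)` with
`‖Φ(x₀) − x₀‖ ≤ φ(τ₀) − τ₀` and `‖x − x₀‖ ≤ τ − τ₀ → ‖Φ'(x)‖ ≤ φ'(τ)`, and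
`τ = φ(τ)` has a smallest solution `τ* ∈ I`, then `Φ` has a fixed point `x*` with
`‖x* − x₀‖ ≤ τ* − τ₀`. -/
theorem kantorovich_fixed_point
    {X : Type*} [NormedAddCommGroup X] [NormedSpace ℝ X] [CompleteSpace X]
    (x₀ : X) (r : ℝ) (hr : 0 < r) (τ₀ : ℝ)
    (Φ : X → X) (Φ' : X → X →L[ℝ] X) (φ φ' : ℝ → ℝ)
    (hΦderiv : ∀ x ∈ ball x₀ r, HasFDerivAt Φ (Φ' x) x)
    (hΦ'cont : ContinuousOn Φ' (ball x₀ r))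
    (hφderiv : ∀ τ ∈ Set.Ico τ₀ (τ₀ + r), HasDerivAt φ (φ' τ) τ)
    (hφ'cont : ContinuousOn φ' (Set.Ico τ₀ (τ₀ + r)))
    (hφmono : StrictMonoOn φ (Set.Ico τ₀ (τ₀ + r)))
    (hinit : ‖Φ x₀ - x₀‖ ≤ φ τ₀ - τ₀)
    (hbound : ∀ τ ∈ Set.Ico τ₀ (τ₀ + r), ∀ x : X, ‖x - x₀‖ ≤ τ - τ₀ → ‖Φ' x‖ ≤ φ' τ)
    (τ_star : ℝ) (hτmem : τ_star ∈ Set.Ico τ₀ (τ₀ + r)) (hsol : τ_star = φ τ_star)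
    (hmin : ∀ τ ∈ Set.Ico τ₀ (τ₀ + r), τ = φ τ → τ_star ≤ τ) :
    ∃ x_star : X, ‖x_star - x₀‖ ≤ τ_star - τ₀ ∧ Φ x_star = x_star := by
  obtain ⟨hτ₀τ, hτr⟩ := hτmem
  have hmemI : ∀ ⦃τ⦄, τ₀ ≤ τ → τ ≤ τ_star → τ ∈ Set.Ico τ₀ (τ₀ + r) :=
    fun τ h1 h2 => ⟨h1, lt_of_le_of_lt h2 hτr⟩
  have hφmono' := hφmono.monotoneOn
  have hτI : τ_star ∈ Set.Ico τ₀ (τ₀ + r) := ⟨hτ₀τ, hτr⟩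
  have hφτ₀ : τ₀ ≤ φ τ₀ := by nlinarith [norm_nonneg (Φ x₀ - x₀)]
  set t : ℕ → ℝ := fun n => φ^[n] τ₀ with ht
  have ht0 : t 0 = τ₀ := rfl
  have htsucc : ∀ n, t (n + 1) = φ (t n) := fun n => Function.iterate_succ_apply' φ n τ₀
  -- basic properties of t
  have hkey : ∀ n, τ₀ ≤ t n ∧ t n ≤ τ_star ∧ t n ≤ t (n + 1) := by
    intro n
    induction n with
    | zero => exact ⟨le_refl _, hτ₀τ, by rw [ht0, htsucc, ht0]; exact hφτ₀⟩
    | succ n ih =>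
      obtain ⟨h1, h2, h3⟩ := ih
      have hm1 : t n ∈ Set.Ico τ₀ (τ₀ + r) := hmemI h1 h2
      have h2' : t (n + 1) ≤ τ_star := by
        rw [htsucc, hsol]; exact hφmono' hm1 hτI h2
      have h1' : τ₀ ≤ t (n + 1) := h1.trans h3
      have hm2 : t (n + 1) ∈ Set.Ico τ₀ (τ₀ + r) := hmemI h1' h2'
      refine ⟨h1', h2', ?_⟩
      rw [htsucc n, htsucc (n + 1)]
      exact hφmono' hm1 hm2 h3
  have htmono : Monotone t := monotone_nat_of_le_succ fun n => (hkey n).2.2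
  have htle : ∀ n, t n ≤ τ_star := fun n => (hkey n).2.1
  have htge : ∀ n, τ₀ ≤ t n := fun n => (hkey n).1
  have htI : ∀ n, t n ∈ Set.Ico τ₀ (τ₀ + r) := fun n => hmemI (htge n) (htle n)
  -- t converges to τ_star
  have hbdd : BddAbove (Set.range t) := ⟨τ_star, by rintro _ ⟨n, rfl⟩; exact htle n⟩
  set L : ℝ := ⨆ n, t n with hL
  have htlimL : Filter.Tendsto t Filter.atTop (nhds L) := tendsto_atTop_ciSup htmono hbdd
  have hLle : L ≤ τ_star := ciSup_le htle
  have hLge : τ₀ ≤ L := (htge 0).trans (le_ciSup hbdd 0)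
  have hLI : L ∈ Set.Ico τ₀ (τ₀ + r) := hmemI hLge hLle
  have hφL : φ L = L := by
    have hc : ContinuousAt φ L := (hφderiv L hLI).continuousAt
    have h1 : Filter.Tendsto (fun n => φ (t n)) Filter.atTop (nhds (φ L)) :=
      (hc.tendsto).comp htlimL
    have h2 : Filter.Tendsto (fun n => t (n + 1)) Filter.atTop (nhds L) :=
      htlimL.comp (Filter.tendsto_add_atTop_nat 1)
    have h3 : (fun n => φ (t n)) = fun n => t (n + 1) := by
      funext n; exact (htsucc n).symm
    rw [h3] at h1
    exact tendsto_nhds_unique h1 h2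
  have hLτ : L = τ_star := le_antisymm hLle (hmin L hLI hφL.symm)
  rw [hLτ] at htlimL
  -- the x sequence
  set xs : ℕ → X := fun n => Φ^[n] x₀ with hxs
  have hxs0 : xs 0 = x₀ := rfl
  have hxssucc : ∀ n, xs (n + 1) = Φ (xs n) := fun n => Function.iterate_succ_apply' Φ n x₀
  have hxkey : ∀ n, ‖xs (n + 1) - xs n‖ ≤ t (n + 1) - t n ∧ ‖xs n - x₀‖ ≤ t n - τ₀ := by
    intro n
    induction n with
    | zero =>
      constructor
      · rw [hxssucc, hxs0, htsucc, ht0]; exact hinit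
      · simp [hxs0, ht0]
    | succ n ih =>
      obtain ⟨h1, h2⟩ := ih
      have h2' : ‖xs (n + 1) - x₀‖ ≤ t (n + 1) - τ₀ := by
        calc ‖xs (n + 1) - x₀‖ ≤ ‖xs (n + 1) - xs n‖ + ‖xs n - x₀‖ :=
              norm_sub_le_norm_sub_add_norm_sub _ _ _
          _ ≤ t (n + 1) - τ₀ := by linarith
      refine ⟨?_, h2'⟩
      have hmvt := kantorovich_mvt_step hΦderiv hφderiv hbound (htge n) (htI (n + 1)).2
        (hkey n).2.2 h2 h1
      rw [← hxssucc (n + 1), ← hxssucc n] at hmvt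
      rw [htsucc (n + 1)]
      have := htsucc n
      linarith
  -- telescoping
  have htele : ∀ n k, ‖xs (n + k) - xs n‖ ≤ t (n + k) - t n := by
    intro n k
    induction k with
    | zero => simp
    | succ k ih =>
      calc ‖xs (n + (k + 1)) - xs n‖
          ≤ ‖xs (n + k + 1) - xs (n + k)‖ + ‖xs (n + k) - xs n‖ := by
            rw [show n + (k + 1) = n + k + 1 from rfl]
            exact norm_sub_le_norm_sub_add_norm_sub _ _ _
        _ ≤ t (n + (k + 1)) - t n := by
            have := (hxkey (n + k)).1
            rw [show n + (k + 1) = n + k + 1 from rfl]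
            linarith
  have hdist : ∀ m n, n ≤ m → ‖xs m - xs n‖ ≤ t m - t n := by
    intro m n hnm
    obtain ⟨k, rfl⟩ := Nat.exists_eq_add_of_le hnm
    exact htele n k
  -- Cauchy
  have hcauchy : CauchySeq xs := by
    apply cauchySeq_of_le_tendsto_0 (fun N => τ_star - t N)
    · intro n m N hn hm
      rcases le_total n m with h | h
      · rw [dist_comm, dist_eq_norm]
        have := hdist m n h
        have := htle m
        have := htmono hn
        linarith
      · rw [dist_eq_norm]
        have := hdist n m h
        have := htle n
        have := htmono hm
        linarith
    · have : Filter.Tendsto (fun N => τ_star - t N) Filter.atTop (nhds (τ_star - τ_star)) :=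
        tendsto_const_nhds.sub htlimL
      simpa using this
  obtain ⟨x_star, hxlim⟩ := cauchySeq_tendsto_of_complete hcauchy
  refine ⟨x_star, ?_, ?_⟩
  · have h1 : Filter.Tendsto (fun n => ‖xs n - x₀‖) Filter.atTop (nhds ‖x_star - x₀‖) :=
      ((hxlim.sub tendsto_const_nhds).norm)
    apply le_of_tendsto h1
    filter_upwards with n
    have := (hxkey n).2
    have := htle n
    linarith
  · have hxsb : ‖x_star - x₀‖ ≤ τ_star - τ₀ := by
      have h1 : Filter.Tendsto (fun n => ‖xs n - x₀‖) Filter.atTop (nhds ‖x_star - x₀‖) :=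
        ((hxlim.sub tendsto_const_nhds).norm)
      apply le_of_tendsto h1
      filter_upwards with n
      have := (hxkey n).2
      have := htle n
      linarith
    have hxball : x_star ∈ ball x₀ r := by
      rw [mem_ball, dist_eq_norm]
      linarith
    have hc : ContinuousAt Φ x_star := (hΦderiv x_star hxball).continuousAt
    have h1 : Filter.Tendsto (fun n => Φ (xs n)) Filter.atTop (nhds (Φ x_star)) :=
      hc.tendsto.comp hxlim
    have h2 : Filter.Tendsto (fun n => xs (n + 1)) Filter.atTop (nhds x_star) :=
      hxlim.comp (Filter.tendsto_add_atTop_nat 1)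
    have h3 : (fun n => Φ (xs n)) = fun n => xs (n + 1) := by
      funext n; exact (hxssucc n).symm
    rw [h3] at h1
    exact tendsto_nhds_unique h1 h2
end
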